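/- arXiv:2604.15880 — 2 statements merged into one kernel-verified Lean document; each statement's English description precedes it below -/
import Mathlib

section
/- Let r ∈ ℕ*, p_k, q_k, b_k ∈ ℕ, m_k = 1 + p_k + b_k, n = Σ_{k=1}^r m_k, and a_{k,i} = (i + q_k/2)/(m_k + 1 + q_k). If the multiset {a_{k,i} : 1 ≤ k ≤ r, 1 ≤ i ≤ m_k} equals {1/(n+1), 2/(n+1), …, n/(n+1)}, then r = 1 (and if n ≥ 2, moreover q_1 = 0 and m_1 = n). -/
/-!
The smallest value `1/(n+1)` must occur as some `a_{k,i}`. Clearing denominators,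
`2(n+1)(i+1) + (n+1)q_k = 2(m_k+1) + 2q_k`, and since `m_k ≤ n` this forces `i = 0`, `m_k = n`
and `(n-1)q_k = 0`. A single block of size `n` exhausts `n = Σ_k m_k`, and every block is
nonempty, so there is only one block.
-/

theorem Finset.eq_singleton_of_sum_le_of_pos {ι : Type*} {s : Finset ι} {f : ι → ℕ} {k : ι}
    (hk : k ∈ s) (hpos : ∀ j ∈ s, 0 < f j) (hsum : ∑ j ∈ s, f j ≤ f k) : s = {k} := by
  classical
  rw [← Finset.add_sum_erase s f hk] at hsum
  have hrest : ∑ j ∈ s.erase k, f j = 0 := by omega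
  rw [Finset.sum_eq_zero_iff] at hrest
  refine Finset.eq_singleton_iff_unique_mem.2 ⟨hk, fun j hj => ?_⟩
  by_contra hjk
  have := hpos j hj
  have := hrest j (Finset.mem_erase.2 ⟨hjk, hj⟩)
  omega

theorem eq_and_eq_zero_of_div_eq_one_div_succ {i m n q : ℕ} (hn : 1 ≤ n) (hm : m ≤ n)
    (h : ((i : ℚ) + 1 + q / 2) / ((m : ℚ) + 1 + q) = 1 / ((n : ℚ) + 1)) :
    m = n ∧ (2 ≤ n → q = 0) := by
  have hcross : 2 * (n + 1) * (i + 1) + (n + 1) * q = 2 * (m + 1) + 2 * q := by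
    rw [div_eq_div_iff (by positivity) (by positivity)] at h
    have : ((2 * (n + 1) * (i + 1) + (n + 1) * q : ℕ) : ℚ) = ((2 * (m + 1) + 2 * q : ℕ) : ℚ) := by
      push_cast
      linarith
    exact_mod_cast this
  have hi : 2 * (n + 1) ≤ 2 * (n + 1) * (i + 1) := Nat.le_mul_of_pos_right _ (by omega)
  have hq : 2 * q ≤ (n + 1) * q := Nat.mul_le_mul_right _ (by omega)
  have hmn : m = n := by omega
  refine ⟨hmn, fun h2 => ?_⟩
  have hi0 : i = 0 := by nlinarith
  subst hmn hi0
  nlinarith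

/-- if the multiset `{a_{k,i}}` equals `{1/(n+1), …, n/(n+1)}`, where
`n = Σ_k m_k`, `m_k = 1 + p_k + b_k`, `a_{k,i} = (i + q_k/2)/(m_k + 1 + q_k)`,
then `r = 1`; and if `n ≥ 2`, moreover `q_1 = 0` and `m_1 = n`. -/
theorem rank_one_from_multiset (r : ℕ) (hr : 0 < r) (p q b : ℕ → ℕ)
    (n : ℕ) (hn : n = ∑ k ∈ Finset.range r, (1 + p k + b k))
    (hmult :
      (Finset.range r).val.bind (fun k =>
        (Finset.range (1 + p k + b k)).val.map (fun i =>
          (((i : ℚ) + 1) + (q k : ℚ) / 2) / (((1 + p k + b k : ℕ) : ℚ) + 1 + (q k : ℚ))))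
        = (Finset.range n).val.map (fun j => ((j : ℚ) + 1) / ((n : ℚ) + 1))) :
    r = 1 ∧ (2 ≤ n → q 0 = 0 ∧ 1 + p 0 + b 0 = n) := by
  have hblock_le : ∀ k ∈ Finset.range r, 1 + p k + b k ≤ n := fun k hk =>
    hn ▸ Finset.single_le_sum (f := fun k => 1 + p k + b k) (fun _ _ => Nat.zero_le _) hk
  have hn1 : 1 ≤ n := by have := hblock_le 0 (Finset.mem_range.2 hr); omega
  have hmin : 1 / ((n : ℚ) + 1) ∈ (Finset.range n).val.map (fun j : ℚ => (j + 1) / (n + 1)) := by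
    simpa using ⟨0, hn1, by simp⟩
  rw [← hmult] at hmin
  obtain ⟨k, hk, hmem⟩ := Multiset.mem_bind.1 hmin
  obtain ⟨x, hx, hi⟩ := Multiset.mem_map.1 hmem
  -- `i` ranges over the cast of `range m` to `Multiset ℚ`, which unfolds to `bind` and `pure`
  obtain ⟨i, -, hx⟩ := Multiset.mem_bind.1 hx
  obtain rfl := Multiset.mem_singleton.1 hx
  obtain ⟨hkn, hq⟩ := eq_and_eq_zero_of_div_eq_one_div_succ hn1 (hblock_le k hk) hi
  have hsingle : Finset.range r = {k} :=
    Finset.eq_singleton_of_sum_le_of_pos (f := fun j => 1 + p j + b j) hk (fun _ _ => by omega)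
      (by rw [← hn, hkn])
  have hr1 : r = 1 := by simpa using congrArg Finset.card hsingle
  obtain rfl : k = 0 := by simpa [hr1] using hk
  exact ⟨hr1, fun h2 => ⟨hq h2, hkn⟩⟩
end

section
/- Let P(y) = Σ_{j=0}^n A_j y^j with A_j ∈ ℝ, A_n ≠ 0, P(1) > 0, and set R(t) := y^{m+1}P(y) with y = 1/(1−t), p(t) := R'(t)/R(t), A, s ∈ ℝ with s ≠ 0. If the identity (A + s·t·p(t))^n · p(t)^{m−1} · (p(t) + t·p'(t)) = C·R(t) holds identically (as an identity of meromorphic functions of t, C a nonzero constant), then P(y) = c·y^n with c = A_n > 0, i.e., R(t) = c(1−t)^{−(n+m+1)}. -/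
/-!
Put `Q(t) = (1 - t)^n P(1/(1 - t))`, the reversal of `P` composed with `1 - t`, so that
`R = Q / (1 - t)^N` with `N = n + m + 1` and `p = u / ((1 - t) Q)` for a polynomial `u`.
Clearing denominators turns the identity into a polynomial identity `E = C · Q^(N+1)`.
If `Q` had a root `α` (necessarily `α ≠ 0, 1`, since `Q(0) = P(1)` and `Q(1) = A_n`) of
multiplicity `q + 1`, the factors of `E` would vanish at `α` to orders exactly `q`, `q` and `2q`,
so `E` vanishes to order `qN < (q + 1)(N + 1)`. Hence `Q` has no root in an algebraic closure,
so it is constant, and then `P` is the monomial `A_n y^n`.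
-/

open Polynomial

namespace Polynomial

section CommRing

variable {K : Type*} [CommRing K]

lemma wronskian_mul_mul_left (f a b : K[X]) :
    wronskian (f * a) (f * b) = f ^ 2 * wronskian a b := by
  simp only [wronskian, derivative_mul]
  ring

lemma wronskian_X_sub_C_pow_succ_mul_pow_mul (α : K) (q : ℕ) (a b : K[X]) :
    wronskian ((X - C α) ^ (q + 1) * a) ((X - C α) ^ q * b) =
      (X - C α) ^ (2 * q) * ((X - C α) * wronskian a b - a * b) := by
  rw [show (X - C α) ^ (q + 1) * a = (X - C α) ^ q * ((X - C α) * a) by ring,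
    wronskian_mul_mul_left, ← pow_mul, mul_comm q 2]
  simp only [wronskian, derivative_mul, derivative_X_sub_C]
  ring

/-- The logarithmic derivative of `Q / (1 - t)^N` is `radialLogDerivNum N Q / ((1 - t) Q)`. -/
noncomputable def radialLogDerivNum (N : ℕ) (Q : K[X]) : K[X] :=
  (1 - X) * derivative Q + (N : K[X]) * Q

/-- With `p = u / S`, `u = radialLogDerivNum N Q`, `S = (1 - t) Q`, this is the numerator of
`(A + s t p)^n p^k (p + t p')` over `S^(n + k + 2)`. -/
noncomputable def einsteinPoly (A s : K) (n k N : ℕ) (Q : K[X]) : K[X] :=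
  (C A * ((1 - X) * Q) + C s * X * radialLogDerivNum N Q) ^ n * radialLogDerivNum N Q ^ k *
    wronskian ((1 - X) * Q) (X * radialLogDerivNum N Q)

lemma map_einsteinPoly {L : Type*} [CommRing L] (f : K →+* L) (A s : K) (n k N : ℕ) (Q : K[X]) :
    (einsteinPoly A s n k N Q).map f = einsteinPoly (f A) (f s) n k N (Q.map f) := by
  simp [einsteinPoly, radialLogDerivNum, wronskian, derivative_map]

lemma radialLogDerivNum_X_sub_C_pow_succ_mul (N q : ℕ) (α : K) (g : K[X]) :
    ∃ w, radialLogDerivNum N ((X - C α) ^ (q + 1) * g) = (X - C α) ^ q * w ∧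
      w.eval α = (1 - α) * ((q + 1) * g.eval α) := by
  refine ⟨(1 - X) * (C ((q : K) + 1) * g + (X - C α) * derivative g) +
    (N : K[X]) * ((X - C α) * g), ?_, by simp⟩
  simp only [radialLogDerivNum, derivative_mul, derivative_X_sub_C_pow]
  push_cast
  ring

end CommRing

lemma X_sub_C_pow_mul_ne_of_lt {K : Type*} [CommRing K] [IsDomain K] {α : K} {i j : ℕ}
    {F G : K[X]} (hij : i < j) (hF : F.eval α ≠ 0) :
    (X - C α) ^ i * F ≠ (X - C α) ^ j * G := by
  intro h
  rw [← pow_mul_pow_sub _ hij.le, mul_assoc] at h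
  have := congrArg (eval α) (mul_left_cancel₀ (pow_ne_zero _ (X_sub_C_ne_zero α)) h)
  simp [zero_pow (Nat.sub_ne_zero_of_lt hij)] at this
  exact hF this

section Field

variable {K : Type*} [Field K]

lemma eval_reverse_inv_mul_pow (P : K[X]) {y : K} (hy : y ≠ 0) :
    P.reverse.eval y⁻¹ * y ^ P.natDegree = P.eval y := by
  let := invertibleOfNonzero hy
  simpa using eval₂_reverse_mul_pow (RingHom.id K) y P

lemma eval_einsteinPoly_div_pow (A s : K) (n k N : ℕ) {Q : K[X]} {t : K}
    (ht : ((1 - X) * Q).eval t ≠ 0) :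
    (einsteinPoly A s n k N Q).eval t / ((1 - X) * Q).eval t ^ (n + k + 2) =
      (A + s * t * ((radialLogDerivNum N Q).eval t / ((1 - X) * Q).eval t)) ^ n *
        ((radialLogDerivNum N Q).eval t / ((1 - X) * Q).eval t) ^ k *
        ((radialLogDerivNum N Q).eval t / ((1 - X) * Q).eval t +
          t * ((wronskian ((1 - X) * Q) (radialLogDerivNum N Q)).eval t /
            ((1 - X) * Q).eval t ^ 2)) := by
  generalize hu : radialLogDerivNum N Q = u
  generalize hS : (1 - X) * Q = S at ht
  simp only [einsteinPoly, hu, hS, wronskian, eval_mul, eval_pow, eval_add, eval_sub, eval_C, eval_X,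
    derivative_mul, derivative_X, one_mul]
  generalize eval t S = σ at ht ⊢
  generalize eval t u = υ
  rw [show A + s * t * (υ / σ) = (A * σ + s * t * υ) / σ by field_simp,
    show υ / σ + t * ((σ * eval t (derivative u) - eval t (derivative S) * υ) / σ ^ 2) =
      (σ * (υ + t * eval t (derivative u)) - eval t (derivative S) * (t * υ)) / σ ^ 2 by
      field_simp; ring,
    div_pow, div_pow, div_mul_div_comm, div_mul_div_comm, ← pow_add, ← pow_add]

variable [CharZero K]

lemma einsteinPoly_X_sub_C_pow_succ_mul {A s : K} (hs : s ≠ 0) (n k N q : ℕ) {α : K}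
    (hα0 : α ≠ 0) (hα1 : α ≠ 1) {g : K[X]} (hg : g.eval α ≠ 0) :
    ∃ F, einsteinPoly A s n k N ((X - C α) ^ (q + 1) * g) = (X - C α) ^ (q * (n + k + 2)) * F ∧
      F.eval α ≠ 0 := by
  have h1α : 1 - α ≠ 0 := sub_ne_zero.mpr hα1.symm
  obtain ⟨w, hu, hwα⟩ := radialLogDerivNum_X_sub_C_pow_succ_mul N q α g
  have hwα0 : w.eval α ≠ 0 := by
    rw [hwα]
    exact mul_ne_zero h1α (mul_ne_zero (by exact_mod_cast q.succ_ne_zero) hg)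
  obtain ⟨b, hb, hbα⟩ : ∃ b, C A * ((1 - X) * ((X - C α) ^ (q + 1) * g)) +
      C s * X * ((X - C α) ^ q * w) = (X - C α) ^ q * b ∧ b.eval α = s * (α * w.eval α) :=
    ⟨C A * ((X - C α) * ((1 - X) * g)) + C s * X * w, by ring, by simp [mul_assoc]⟩
  obtain ⟨v, hv, hvα⟩ : ∃ v, wronskian ((1 - X) * ((X - C α) ^ (q + 1) * g))
      (X * ((X - C α) ^ q * w)) = (X - C α) ^ (2 * q) * v ∧
      v.eval α = -((1 - α) * g.eval α * (α * w.eval α)) := by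
    refine ⟨(X - C α) * wronskian ((1 - X) * g) (X * w) - (1 - X) * g * (X * w), ?_, by simp⟩
    rw [mul_left_comm (1 - X), mul_left_comm X]
    exact wronskian_X_sub_C_pow_succ_mul_pow_mul α q _ _
  refine ⟨b ^ n * w ^ k * v, ?_, ?_⟩
  · rw [einsteinPoly, hu, hb, hv]
    generalize X - C α = Z
    ring
  · simp only [eval_mul, eval_pow, hbα, hvα]
    exact mul_ne_zero (mul_ne_zero (pow_ne_zero _ (mul_ne_zero hs (mul_ne_zero hα0 hwα0)))
      (pow_ne_zero _ hwα0))
      (neg_ne_zero.mpr (mul_ne_zero (mul_ne_zero h1α hg) (mul_ne_zero hα0 hwα0)))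

theorem eval_ne_zero_of_einsteinPoly_eq {A s c : K} {n k N : ℕ} {Q : K[X]} (hs : s ≠ 0)
    (hQ0 : Q.eval 0 ≠ 0) (hQ1 : Q.eval 1 ≠ 0)
    (hE : einsteinPoly A s n k N Q = C c * Q ^ (n + k + 3)) (α : K) : Q.eval α ≠ 0 := by
  intro hα
  have hQ : Q ≠ 0 := by rintro rfl; simp at hQ0
  obtain ⟨g, hQg, hgα⟩ := exists_eq_pow_rootMultiplicity_mul_and_not_dvd Q hQ α
  obtain ⟨q, hq⟩ : ∃ q, Q.rootMultiplicity α = q + 1 :=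
    Nat.exists_eq_succ_of_ne_zero ((rootMultiplicity_pos hQ).mpr hα).ne'
  rw [hq] at hQg
  subst hQg
  obtain ⟨F, hF, hFα⟩ := einsteinPoly_X_sub_C_pow_succ_mul (A := A) hs n k N q
    (by rintro rfl; exact hQ0 hα) (by rintro rfl; exact hQ1 hα) (mt dvd_iff_isRoot.mpr hgα)
  have key : (X - C α) ^ (q * (n + k + 2)) * F =
      (X - C α) ^ ((q + 1) * (n + k + 3)) * (C c * g ^ (n + k + 3)) := by
    rw [← hF, hE]
    generalize X - C α = Z
    ring
  exact X_sub_C_pow_mul_ne_of_lt (by nlinarith) hFα key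

theorem natDegree_eq_zero_of_einsteinPoly_eq {A s c : K} {n k N : ℕ} {Q : K[X]} (hs : s ≠ 0)
    (hQ0 : Q.eval 0 ≠ 0) (hQ1 : Q.eval 1 ≠ 0)
    (hE : einsteinPoly A s n k N Q = C c * Q ^ (n + k + 3)) : Q.natDegree = 0 := by
  set f := algebraMap K (AlgebraicClosure K)
  have hE' := congrArg (map f) hE
  rw [map_einsteinPoly, Polynomial.map_mul, Polynomial.map_pow, map_C] at hE'
  have hroots := eval_ne_zero_of_einsteinPoly_eq (by simpa using hs)
    (by simpa [eval_zero_map] using hQ0) (by simpa [eval_one_map] using hQ1) hE'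
  by_contra hdeg
  obtain ⟨z, hz⟩ := IsAlgClosed.exists_root (Q.map f) fun h =>
    hdeg ((natDegree_map f).symm.trans (natDegree_eq_of_degree_eq_some h))
  exact hroots z hz

end Field

section Calculus

variable {𝕜 : Type*} [NontriviallyNormedField 𝕜]

lemma hasDerivAt_eval_div_eval (f g : 𝕜[X]) {t : 𝕜} (ht : g.eval t ≠ 0) :
    HasDerivAt (fun x => f.eval x / g.eval x) ((wronskian g f).eval t / g.eval t ^ 2) t := by
  refine ((f.hasDerivAt t).fun_div (g.hasDerivAt t) ht).congr_deriv ?_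
  simp only [wronskian, eval_sub, eval_mul]
  ring

lemma hasDerivAt_eval_div_one_sub_pow (Q : 𝕜[X]) (N : ℕ) {t : 𝕜} (ht : 1 - t ≠ 0) :
    HasDerivAt (fun x => Q.eval x / (1 - x) ^ N)
      ((radialLogDerivNum N Q).eval t / (1 - t) ^ (N + 1)) t := by
  have hD : HasDerivAt (fun x => (1 - x) ^ N) (N * (1 - t) ^ (N - 1) * -1) t := by
    simpa using ((hasDerivAt_id t).const_sub 1).fun_pow N
  refine ((Q.hasDerivAt t).fun_div hD (pow_ne_zero N ht)).congr_deriv ?_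
  rcases N with _ | N
  · simp [radialLogDerivNum]
    field_simp
  · simp [radialLogDerivNum]
    field_simp
    ring

lemma deriv_div_self_eq_of_eq_div_one_sub_pow {Q : 𝕜[X]} {N : ℕ} {R : 𝕜 → 𝕜}
    (hR : ∀ t ≠ 1, R t = Q.eval t / (1 - t) ^ N) {t : 𝕜} (ht : t ≠ 1) (hQ : Q.eval t ≠ 0) :
    deriv R t / R t = (radialLogDerivNum N Q).eval t / ((1 - X) * Q).eval t := by
  have h1t : 1 - t ≠ 0 := sub_ne_zero.mpr (Ne.symm ht)
  rw [((hasDerivAt_eval_div_one_sub_pow Q N h1t).congr_of_eventuallyEq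
    ((eventually_ne_nhds ht).mono hR)).deriv, hR t ht]
  simp only [eval_mul, eval_sub, eval_one, eval_X]
  field_simp
  ring

end Calculus

theorem einsteinPoly_eq_of_forall_Ioo {Q : ℝ[X]} (hQ : Q ≠ 0) {n k : ℕ} {A s c : ℝ}
    {R p : ℝ → ℝ} (hR : ∀ t ≠ 1, R t = Q.eval t / (1 - t) ^ (n + k + 2))
    (hp : ∀ t, p t = deriv R t / R t)
    (hid : ∀ t ∈ Set.Ioo (0 : ℝ) 1, R t ≠ 0 →
      (A + s * t * p t) ^ n * p t ^ k * (p t + t * deriv p t) = c * R t) :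
    einsteinPoly A s n k (n + k + 2) Q = C c * Q ^ (n + k + 3) := by
  set S : ℝ[X] := (1 - X) * Q
  set U := {t : ℝ | t ≠ 1 ∧ Q.eval t ≠ 0}
  have hU : IsOpen U := isOpen_ne.inter (isOpen_compl_singleton.preimage Q.continuous)
  have hSU : ∀ t ∈ U, S.eval t ≠ 0 := fun t ht => by
    simpa [S] using mul_ne_zero (sub_ne_zero.mpr (Ne.symm ht.1)) ht.2
  have hpU : Set.EqOn p (fun t => (radialLogDerivNum (n + k + 2) Q).eval t / S.eval t) U :=
    fun t ht => (hp t).trans (deriv_div_self_eq_of_eq_div_one_sub_pow hR ht.1 ht.2)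
  have hp'U : ∀ t ∈ U, deriv p t =
      (wronskian S (radialLogDerivNum (n + k + 2) Q)).eval t / S.eval t ^ 2 := fun t ht =>
    ((hasDerivAt_eval_div_eval _ S (hSU t ht)).congr_of_eventuallyEq
      (Filter.eventually_of_mem (hU.mem_nhds ht) hpU)).deriv
  refine eq_of_infinite_eval_eq _ _ (Set.Infinite.mono ?_
    ((Set.Ioo_infinite zero_lt_one).sdiff (Q.finite_setOfPred_isRoot hQ)))
  rintro t ⟨ht, htQ⟩
  have htU : t ∈ U := ⟨ht.2.ne, htQ⟩
  have h1t : 1 - t ≠ 0 := sub_ne_zero.mpr (Ne.symm htU.1)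
  have h := hid t ht (by rw [hR t htU.1]; exact div_ne_zero htQ (pow_ne_zero _ h1t))
  rw [hpU htU, hp'U t htU, ← eval_einsteinPoly_div_pow A s n k _ (hSU t htU), hR t htU.1,
    ← mul_div_assoc, div_eq_div_iff (pow_ne_zero _ (hSU t htU)) (pow_ne_zero _ h1t)] at h
  apply mul_right_cancel₀ (pow_ne_zero (n + k + 2) h1t)
  simp only [h, S, eval_mul, eval_C, eval_pow, eval_sub, eval_one, eval_X, mul_pow]
  ring

end Polynomial

theorem radial_collapse_general (n m : ℕ) (hm : 0 < m)
    (P : Polynomial ℝ) (hdeg : P.natDegree = n) (hAn : P.coeff n ≠ 0)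
    (hP1 : 0 < P.eval 1) (A s C : ℝ) (hs : s ≠ 0)
    (R : ℝ → ℝ) (hR : ∀ t : ℝ, R t = (1 / (1 - t)) ^ (m + 1) * P.eval (1 / (1 - t)))
    (p : ℝ → ℝ) (hp : ∀ t : ℝ, p t = deriv R t / R t)
    (hid : ∀ t ∈ Set.Ioo (0 : ℝ) 1, R t ≠ 0 →
      (A + s * t * p t) ^ n * (p t) ^ (m - 1) * (p t + t * deriv p t) = C * R t) :
    0 < P.coeff n ∧ P = Polynomial.C (P.coeff n) * Polynomial.X ^ n ∧
      ∀ t : ℝ, R t = P.coeff n * (1 / (1 - t)) ^ (n + m + 1) := by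
  obtain ⟨k, rfl⟩ : ∃ k, m = k + 1 := ⟨m - 1, by omega⟩
  set Q := P.reverse.comp (1 - X)
  have hQ0 : Q.eval 0 = P.eval 1 := by simpa [Q] using eval_reverse_inv_mul_pow P one_ne_zero
  have hQ1 : Q.eval 1 = P.coeff n := by simp [Q, ← coeff_zero_eq_eval_zero, leadingCoeff, hdeg]
  have hRQ : ∀ t ≠ 1, R t = Q.eval t / (1 - t) ^ (n + k + 2) := by
    intro t ht
    have h1t : 1 - t ≠ 0 := sub_ne_zero.mpr (Ne.symm ht)
    rw [hR, ← eval_reverse_inv_mul_pow P (one_div_ne_zero h1t), hdeg]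
    simp [Q]
    field_simp
    ring
  have hE := einsteinPoly_eq_of_forall_Ioo (fun h => by simp [h] at hQ0; linarith) hRQ hp
    (by simpa using hid)
  have hQdeg := natDegree_eq_zero_of_einsteinPoly_eq hs (hQ0 ▸ hP1.ne') (hQ1 ▸ hAn) hE
  have hrev : P.reverse = Polynomial.C (P.coeff n) := by
    rw [natDegree_comp, show (1 - X : ℝ[X]).natDegree = 1 by compute_degree!, mul_one] at hQdeg
    rw [eq_C_of_natDegree_eq_zero hQdeg, coeff_zero_reverse, leadingCoeff, hdeg]
  have hPX : P = Polynomial.C (P.coeff n) * X ^ n := by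
    rw [← reflect_C, ← hrev, reverse, hdeg, reflect_reflect]
  have hPeval : ∀ y, P.eval y = P.coeff n * y ^ n := fun y => by
    conv_lhs => rw [hPX]
    simp
  refine ⟨by simpa [hPeval] using hP1, hPX, fun t => ?_⟩
  rw [hR, hPeval]
  ring

/-- collapse of the radial factor. If `P` has degree exactly `n`,
`P(1) > 0`, `R(t) = y^{m+1}P(y)` with `y = 1/(1−t)`, `p = R'/R`, `s ≠ 0`, and the
Einstein identity `(A + s t p)^n p^{m−1}(p + t p') = C·R` holds identically
(`C` a nonzero constant), then `P(y) = c·y^n` with `c = A_n > 0`, i.e.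
`R(t) = c(1−t)^{−(n+m+1)}`. -/
theorem radial_collapse (n m : ℕ) (hn : 0 < n) (hm : 0 < m)
    (P : Polynomial ℝ) (hdeg : P.natDegree = n) (hAn : P.coeff n ≠ 0)
    (hP1 : 0 < P.eval 1) (A s C : ℝ) (hs : s ≠ 0) (hC : C ≠ 0)
    (R : ℝ → ℝ) (hR : ∀ t : ℝ, R t = (1 / (1 - t)) ^ (m + 1) * P.eval (1 / (1 - t)))
    (p : ℝ → ℝ) (hp : ∀ t : ℝ, p t = deriv R t / R t)
    (hid : ∀ t ∈ Set.Ioo (0 : ℝ) 1, R t ≠ 0 →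
      (A + s * t * p t) ^ n * (p t) ^ (m - 1) * (p t + t * deriv p t) = C * R t) :
    0 < P.coeff n ∧ P = Polynomial.C (P.coeff n) * Polynomial.X ^ n ∧
      ∀ t : ℝ, R t = P.coeff n * (1 / (1 - t)) ^ (n + m + 1) :=
  radial_collapse_general n m hm P hdeg hAn hP1 A s C hs R hR p hp hid
end
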